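/- Let p > 0 and let g : ℝ → ℝ be defined by g(x) = (54π(1 - |x|/p)·cos(πx/p) + 6π(1 - |x|/p)·cos(3πx/p) + 27·sin(π|x|/p) + 11·sin(3π|x|/p)) / (60π) for |x| ≤ p and g(x) = 0 for |x| > p. Then for every real r with p²r² ∉ {π², 9π²}, ∫_ℝ g(x) e^{irx} dx = 2304·p·π⁶·cos²(pr/2) / (5·(9π⁴ - 10p²π²r² + p⁴r⁴)²). In particular this Fourier transform is nonnegative on ℝ. -/

import Mathlib

/-!
Since `g` is even, its Fourier transform is the cosine transform `2 ∫₀ᵖ g(x) cos(rx) dx`.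
Product-to-sum formulas reduce this to the integrals of `(1 - x/p) cos(ωx)` and `sin(ωx)` over
`[0, p]` with `ω = kπ/p ± r`, `k ∈ {1, 3}`. As `cos(kπ ± rp) = -cos(rp)` for odd `k`, every term
carries the factor `1 + cos(rp) = 2 cos²(pr/2)`. The transform is continuous in `r`, so its
nonnegativity extends to the four excluded frequencies.
-/

open MeasureTheory Real ComplexConjugate

theorem integral_ofReal_mul_exp_eq_integral_mul_cos {g : ℝ → ℝ} (hg : Integrable g)
    (heven : ∀ x, g (-x) = g x) (r : ℝ) :
    ∫ x, (g x : ℂ) * Complex.exp (Complex.I * r * x) = ((∫ x, g x * cos (r * x) : ℝ) : ℂ) := by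
  set F : ℝ → ℂ := fun x => (g x : ℂ) * Complex.exp (Complex.I * r * x)
  have hF : Integrable F := hg.ofReal.mul_bdd (by fun_prop) (c := 1) (.of_forall fun x => by
    simp [Complex.norm_exp])
  have hconj : ∀ x, F (-x) = conj (F x) := fun x => by
    simp [F, heven, ← Complex.exp_conj]
  have hre : ∀ x, (F x).re = g x * cos (r * x) := fun x => by
    rw [Complex.re_ofReal_mul, show Complex.I * r * x = ((r * x : ℝ) : ℂ) * Complex.I by
      push_cast; ring, Complex.exp_ofReal_mul_I_re]
  have hreal : conj (∫ x, F x) = ∫ x, F x := by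
    rw [← integral_conj, ← integral_neg_eq_self]
    simp_rw [hconj, Complex.conj_conj]
  have hre_int : ∫ x, (F x).re = (∫ x, F x).re := integral_re hF
  rw [← Complex.conj_eq_iff_re.1 hreal, ← hre_int]
  simp_rw [hre]

theorem continuous_integral_mul_cos {g : ℝ → ℝ} (hg : Integrable g) :
    Continuous fun r => ∫ x, g x * cos (r * x) := by
  refine continuous_of_dominated (bound := fun x => |g x|)
    (fun r => hg.aestronglyMeasurable.mul (by fun_prop)) (fun r => .of_forall fun x => ?_)
    hg.abs (.of_forall fun x => by fun_prop)
  simpa [abs_mul] using mul_le_of_le_one_right (abs_nonneg (g x)) (abs_cos_le_one (r * x))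

theorem nonneg_of_continuous_of_nonneg_compl_countable {f : ℝ → ℝ} (hf : Continuous f)
    {S : Set ℝ} (hS : S.Countable) (h : ∀ r ∉ S, 0 ≤ f r) (r : ℝ) : 0 ≤ f r := by
  have : closure Sᶜ ⊆ {r | 0 ≤ f r} := (isClosed_le continuous_const hf).closure_subset_iff.2 h
  rw [(hS.dense_compl ℝ).closure_eq] at this
  exact this (Set.mem_univ r)

theorem finite_setOf_sq_mul_sq_eq {p : ℝ} (hp : p ≠ 0) (c : ℝ) :
    {r : ℝ | p ^ 2 * r ^ 2 = c ^ 2}.Finite := by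
  refine (Set.toFinite {c / p, -(c / p)}).subset fun r hr => ?_
  have hr : (p * r) ^ 2 = c ^ 2 := by rw [mul_pow]; exact hr
  rcases sq_eq_sq_iff_eq_or_eq_neg.1 hr with h | h
  · left; field_simp; linear_combination h
  · right; rw [Set.mem_singleton_iff]; field_simp; linear_combination h

theorem integral_one_sub_div_mul_cos {p ω : ℝ} (hp : p ≠ 0) (hω : ω ≠ 0) :
    ∫ x in (0 : ℝ)..p, (1 - x / p) * cos (ω * x) = (1 - cos (ω * p)) / (p * ω ^ 2) := by
  have hderiv : ∀ x, HasDerivAt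
      (fun x => (1 - x / p) * sin (ω * x) / ω - cos (ω * x) / (p * ω ^ 2))
      ((1 - x / p) * cos (ω * x)) x := fun x => by
    have hlin : HasDerivAt (fun x => ω * x) ω x := by simpa using (hasDerivAt_id x).const_mul ω
    refine (((((hasDerivAt_id' x).div_const p).const_sub 1).mul hlin.sin).div_const ω
      |>.sub (hlin.cos.div_const (p * ω ^ 2))).congr_deriv ?_
    field_simp
    ring
  rw [intervalIntegral.integral_eq_sub_of_hasDerivAt (fun x _ => hderiv x)
    (by apply Continuous.intervalIntegrable; fun_prop)]
  simp only [div_self hp, sub_self, zero_mul, zero_div, mul_zero, sin_zero, cos_zero]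
  field_simp
  ring

theorem integral_sin_mul {p ω : ℝ} (hω : ω ≠ 0) :
    ∫ x in (0 : ℝ)..p, sin (ω * x) = (1 - cos (ω * p)) / ω := by
  rw [intervalIntegral.integral_comp_mul_left (fun x => sin x) hω, integral_sin]
  simp [div_eq_inv_mul]

theorem cos_add_mul_of_cos_mul_eq_neg_one {a p : ℝ} (ha : cos (a * p) = -1) (s : ℝ) :
    cos ((a + s) * p) = -cos (s * p) := by
  have hsin : sin (a * p) = 0 := by nlinarith [sin_sq_add_cos_sq (a * p)]
  rw [add_mul, cos_add, ha, hsin]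
  ring

theorem cos_sub_mul_of_cos_mul_eq_neg_one {a p : ℝ} (ha : cos (a * p) = -1) (s : ℝ) :
    cos ((a - s) * p) = -cos (s * p) := by
  simpa [← sub_eq_add_neg] using cos_add_mul_of_cos_mul_eq_neg_one ha (-s)

theorem integral_one_sub_div_mul_cos_mul_cos {p a r : ℝ} (hp : p ≠ 0) (ha : cos (a * p) = -1)
    (hsub : a - r ≠ 0) (hadd : a + r ≠ 0) :
    ∫ x in (0 : ℝ)..p, (1 - x / p) * cos (a * x) * cos (r * x)
      = (1 + cos (r * p)) / (2 * p) * (1 / (a - r) ^ 2 + 1 / (a + r) ^ 2) := by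
  have hsum : ∀ x, (1 - x / p) * cos (a * x) * cos (r * x)
      = ((1 - x / p) * cos ((a - r) * x) + (1 - x / p) * cos ((a + r) * x)) / 2 := fun x => by
    rw [sub_mul a, add_mul a, cos_sub, cos_add]
    ring
  simp_rw [hsum]
  rw [intervalIntegral.integral_div, intervalIntegral.integral_add
    (by apply Continuous.intervalIntegrable; fun_prop)
    (by apply Continuous.intervalIntegrable; fun_prop),
    integral_one_sub_div_mul_cos hp hsub, integral_one_sub_div_mul_cos hp hadd,
    cos_sub_mul_of_cos_mul_eq_neg_one ha, cos_add_mul_of_cos_mul_eq_neg_one ha]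
  field_simp
  ring

theorem integral_sin_mul_mul_cos_mul {p a r : ℝ} (ha : cos (a * p) = -1)
    (hsub : a - r ≠ 0) (hadd : a + r ≠ 0) :
    ∫ x in (0 : ℝ)..p, sin (a * x) * cos (r * x)
      = (1 + cos (r * p)) / 2 * (1 / (a + r) + 1 / (a - r)) := by
  have hsum : ∀ x, sin (a * x) * cos (r * x) = (sin ((a + r) * x) + sin ((a - r) * x)) / 2 :=
    fun x => by
      rw [sub_mul, add_mul, sin_sub, sin_add]
      ring
  simp_rw [hsum]
  rw [intervalIntegral.integral_div, intervalIntegral.integral_add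
    (by apply Continuous.intervalIntegrable; fun_prop)
    (by apply Continuous.intervalIntegrable; fun_prop),
    integral_sin_mul hsub, integral_sin_mul hadd,
    cos_sub_mul_of_cos_mul_eq_neg_one ha, cos_add_mul_of_cos_mul_eq_neg_one ha]
  field_simp
  ring

theorem indicator_Icc_neg {f : ℝ → ℝ} (heven : ∀ x, f (-x) = f x) (p x : ℝ) :
    (Set.Icc (-p) p).indicator f (-x) = (Set.Icc (-p) p).indicator f x := by
  simp only [Set.indicator_apply, Set.mem_Icc, heven, neg_le_neg_iff, neg_le, and_comm]

theorem integral_indicator_Icc_mul_cos {f : ℝ → ℝ} (hf : Continuous f)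
    (heven : ∀ x, f (-x) = f x) {p : ℝ} (hp : 0 ≤ p) (r : ℝ) :
    ∫ x, (Set.Icc (-p) p).indicator f x * cos (r * x) = 2 * ∫ x in 0..p, f x * cos (r * x) := by
  have hcont : Continuous fun x => f x * cos (r * x) := by fun_prop
  have hflip : ∫ x in -p..0, f x * cos (r * x) = ∫ x in 0..p, f x * cos (r * x) := by
    simpa [heven] using
      (intervalIntegral.integral_comp_neg (a := 0) (b := p) (fun x => f x * cos (r * x))).symm
  have hind : ∀ x, (Set.Icc (-p) p).indicator f x * cos (r * x)
      = (Set.Icc (-p) p).indicator (fun x => f x * cos (r * x)) x :=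
    fun x => (Set.indicator_mul_left _ f fun x => cos (r * x)).symm
  simp_rw [hind]
  rw [integral_indicator measurableSet_Icc, integral_Icc_eq_integral_Ioc,
    ← intervalIntegral.integral_of_le (by linarith),
    ← intervalIntegral.integral_add_adjacent_intervals (b := 0)
      (hcont.intervalIntegrable _ _) (hcont.intervalIntegrable _ _), hflip]
  ring

noncomputable def bumpProfile (p x : ℝ) : ℝ :=
  (54*π*(1 - |x|/p) * cos (π*x/p) + 6*π*(1 - |x|/p) * cos (3*π*x/p)
    + 27 * sin (π*|x|/p) + 11 * sin (3*π*|x|/p)) / (60*π)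

theorem bumpProfile_neg (p x : ℝ) : bumpProfile p (-x) = bumpProfile p x := by
  simp [bumpProfile, mul_neg, neg_div]

theorem continuous_bumpProfile (p : ℝ) : Continuous (bumpProfile p) := by
  unfold bumpProfile
  fun_prop

theorem integral_bumpProfile_mul_cos {p r : ℝ} (hp : 0 < p) (h₁ : p ^ 2 * r ^ 2 ≠ π ^ 2)
    (h₃ : p ^ 2 * r ^ 2 ≠ 9 * π ^ 2) :
    ∫ x in 0..p, bumpProfile p x * cos (r * x)
      = 1152 * p * π ^ 6 * cos (p * r / 2) ^ 2
          / (5 * (9 * π ^ 4 - 10 * p ^ 2 * π ^ 2 * r ^ 2 + p ^ 4 * r ^ 4) ^ 2) := by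
  have hne : ∀ c, p ^ 2 * r ^ 2 ≠ c ^ 2 → c - p * r ≠ 0 ∧ c + p * r ≠ 0 := fun c hc => by
    constructor <;> intro h <;> apply hc
    · linear_combination -(c + p * r) * h
    · linear_combination (p * r - c) * h
  obtain ⟨ha₁, ha₂⟩ := hne π h₁
  obtain ⟨hb₁, hb₂⟩ := hne (3 * π) fun h => h₃ (by linear_combination h)
  have hfreq : ∀ c, c - p * r ≠ 0 → c + p * r ≠ 0 → c / p - r ≠ 0 ∧ c / p + r ≠ 0 :=
    fun c h₁ h₂ => ⟨by rw [div_sub' hp.ne']; exact div_ne_zero h₁ hp.ne',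
      by rw [div_add' _ _ _ hp.ne', mul_comm r]; exact div_ne_zero h₂ hp.ne'⟩
  have hcos_a : cos (π / p * p) = -1 := by rw [div_mul_cancel₀ _ hp.ne', cos_pi]
  have hcos_b : cos (3 * π / p * p) = -1 := by
    rw [div_mul_cancel₀ _ hp.ne', show 3 * π = π + 2 * π by ring, cos_add_two_pi, cos_pi]
  have hsplit : ∫ x in 0..p, bumpProfile p x * cos (r * x) = ∫ x in 0..p,
      (54 * π * ((1 - x / p) * cos (π / p * x) * cos (r * x))
        + 6 * π * ((1 - x / p) * cos (3 * π / p * x) * cos (r * x))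
        + 27 * (sin (π / p * x) * cos (r * x)) + 11 * (sin (3 * π / p * x) * cos (r * x)))
        / (60 * π) := by
    refine intervalIntegral.integral_congr fun x hx => ?_
    rw [Set.uIcc_of_le hp.le] at hx
    simp only [bumpProfile, abs_of_nonneg hx.1]
    ring_nf
  rw [hsplit, intervalIntegral.integral_div, intervalIntegral.integral_add,
    intervalIntegral.integral_add, intervalIntegral.integral_add,
    intervalIntegral.integral_const_mul, intervalIntegral.integral_const_mul,
    intervalIntegral.integral_const_mul, intervalIntegral.integral_const_mul,
    integral_one_sub_div_mul_cos_mul_cos hp.ne' hcos_a (hfreq _ ha₁ ha₂).1 (hfreq _ ha₁ ha₂).2,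
    integral_one_sub_div_mul_cos_mul_cos hp.ne' hcos_b (hfreq _ hb₁ hb₂).1 (hfreq _ hb₁ hb₂).2,
    integral_sin_mul_mul_cos_mul hcos_a (hfreq _ ha₁ ha₂).1 (hfreq _ ha₁ ha₂).2,
    integral_sin_mul_mul_cos_mul hcos_b (hfreq _ hb₁ hb₂).1 (hfreq _ hb₁ hb₂).2]
  · have hden : 9 * π ^ 4 - 10 * p ^ 2 * π ^ 2 * r ^ 2 + p ^ 4 * r ^ 4
        = (π - p * r) * (π + p * r) * ((3 * π - p * r) * (3 * π + p * r)) := by ring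
    rw [show r * p = 2 * (p * r / 2) by ring, cos_two_mul, hden]
    -- `field_simp` looks for the nonvanishing of `π * 3 ± p * r`, its normal form of `3 * π ± p * r`
    rw [mul_comm 3 π] at hb₁ hb₂
    field_simp
    ring
  all_goals exact Continuous.intervalIntegrable (by fun_prop) _ _

theorem stmt_5 (p : ℝ) (hp : 0 < p) (g : ℝ → ℝ)
    (hg : ∀ x : ℝ, g x = if |x| ≤ p then
      (54*π*(1 - |x|/p) * Real.cos (π*x/p) + 6*π*(1 - |x|/p) * Real.cos (3*π*x/p)
        + 27 * Real.sin (π*|x|/p) + 11 * Real.sin (3*π*|x|/p)) / (60*π)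
      else 0) :
    (∀ r : ℝ, p^2 * r^2 ≠ π^2 → p^2 * r^2 ≠ 9*π^2 →
      ∫ x : ℝ, (g x : ℂ) * Complex.exp (Complex.I * r * x)
        = ((2304 * p * π^6 * Real.cos (p*r/2)^2
            / (5 * (9*π^4 - 10*p^2*π^2*r^2 + p^4*r^4)^2) : ℝ) : ℂ)) ∧
    (∀ r : ℝ, 0 ≤ (∫ x : ℝ, (g x : ℂ) * Complex.exp (Complex.I * r * x)).re) := by
  obtain rfl : g = (Set.Icc (-p) p).indicator (bumpProfile p) := funext fun x => by
    simp only [hg, Set.indicator_apply, Set.mem_Icc, ← abs_le, bumpProfile]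
  have hint : Integrable ((Set.Icc (-p) p).indicator (bumpProfile p)) :=
    (continuous_bumpProfile p).integrableOn_Icc.integrable_indicator measurableSet_Icc
  have hcos : ∀ r, p ^ 2 * r ^ 2 ≠ π ^ 2 → p ^ 2 * r ^ 2 ≠ 9 * π ^ 2 →
      ∫ x, (Set.Icc (-p) p).indicator (bumpProfile p) x * cos (r * x)
        = 2304 * p * π ^ 6 * cos (p * r / 2) ^ 2
          / (5 * (9 * π ^ 4 - 10 * p ^ 2 * π ^ 2 * r ^ 2 + p ^ 4 * r ^ 4) ^ 2) := fun r h₁ h₃ => by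
    rw [integral_indicator_Icc_mul_cos (continuous_bumpProfile p) (bumpProfile_neg p) hp.le,
      integral_bumpProfile_mul_cos hp h₁ h₃]
    ring
  have hexcept : {r : ℝ | p ^ 2 * r ^ 2 = π ^ 2 ∨ p ^ 2 * r ^ 2 = (3 * π) ^ 2}.Countable := by
    rw [Set.ofPred_or]
    exact ((finite_setOf_sq_mul_sq_eq hp.ne' π).union
      (finite_setOf_sq_mul_sq_eq hp.ne' (3 * π))).countable
  simp_rw [integral_ofReal_mul_exp_eq_integral_mul_cos hint
    (indicator_Icc_neg (bumpProfile_neg p) p), Complex.ofReal_re]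
  refine ⟨fun r h₁ h₃ => by rw [hcos r h₁ h₃], nonneg_of_continuous_of_nonneg_compl_countable
    (continuous_integral_mul_cos hint) hexcept fun r hr => ?_⟩
  obtain ⟨h₁, h₃⟩ := not_or.1 hr
  rw [hcos r h₁ fun h => h₃ (by linear_combination h)]
  positivity
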